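/- Let x ∈ ℝ^L be a feasible solution of the partition LP (P) of a 2NC-TAP instance, and define x̃ ∈ ℝ^E by x̃_ℓ := x_ℓ for each link ℓ ∈ L and x̃_e := 1 for each tree edge e ∈ E(T). Then x̃ satisfies all cut constraints for 2-edge connectivity: for every set S with ∅ ⊊ S ⊊ V, Σ_{e ∈ δ_G(S)} x̃_e ≥ 2, where δ_G(S) denotes the set of edges of G with exactly one endpoint in S. -/

import Mathlib

/-!
The tree `T` has an edge `uv` leaving `S`. If another tree edge leaves `S`, the two tree edges
already contribute `2`. Otherwise `uv` is the only one, and since `|V| ≥ 3` one of its ends is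
not a leaf; replacing `S` by its complement if necessary, this is `u ∈ S`. No edge of `T − u`
then joins `S ∖ {u}` to `V ∖ S`, and `S ∖ {u}` contains a second neighbour of `u`, so
`{S ∖ {u}, V ∖ S} ∈ Ptn⊇(comps(T−u))`. Its LP constraint puts weight `≥ 1` on links crossing it,
all of which lie in `δ(S)`, and `uv` adds `1`.
-/

open scoped Classical
open Finset

namespace TwoNCTAP

variable {V : Type*}

/-- The graph `H` with the vertex `u` "deleted": all edges incident to `u` are removed,
so that `u` becomes an isolated vertex. -/
def delVert (H : SimpleGraph V) (u : V) : SimpleGraph V where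
  Adj a b := H.Adj a b ∧ a ≠ u ∧ b ≠ u
  symm := ⟨by rintro a b ⟨h, ha, hb⟩; exact ⟨h.symm, hb, ha⟩⟩
  loopless := ⟨by rintro a ⟨h, -, -⟩; exact H.loopless.irrefl a h⟩

/-- The partition of `V ∖ {u}` into the vertex sets of the connected components of `H − u`. -/
def compPartition (H : SimpleGraph V) (u : V) : Set (Set V) :=
  {S | ∃ v, v ≠ u ∧ S = {w | (delVert H u).Reachable v w}}

/-- `P` is a partition of the set `S`. -/
def IsPartitionOf (P : Set (Set V)) (S : Set V) : Prop :=
  (∀ B ∈ P, B.Nonempty) ∧ (∀ B ∈ P, B ⊆ S) ∧ ∀ v ∈ S, ∃! B : Set V, B ∈ P ∧ v ∈ B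

/-- `P ∈ Ptn⊇(comps(T−u))`: `P` is a partition of `V ∖ {u}` each of whose blocks is a
union of vertex sets of connected components of `T − u`. -/
def PtnSup (T : SimpleGraph V) (u : V) (P : Set (Set V)) : Prop :=
  IsPartitionOf P {v | v ≠ u} ∧ ∀ B ∈ compPartition T u, ∃ C ∈ P, B ⊆ C

/-- An edge `e` crosses the partition `P` if its two endpoints lie in different blocks of `P`. -/
def Crosses (P : Set (Set V)) (e : Sym2 V) : Prop :=
  ∃ v w, e = s(v, w) ∧ ∃ B ∈ P, ∃ C ∈ P, B ≠ C ∧ v ∈ B ∧ w ∈ C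

/-- `u` is a non-leaf node of `T`. -/
def NonLeaf (T : SimpleGraph V) (u : V) : Prop := 1 < (T.neighborSet u).ncard

/-- The links of the instance: the edges of `G` that are not edges of the tree `T`. -/
def links (G T : SimpleGraph V) : Set (Sym2 V) := G.edgeSet \ T.edgeSet

variable [Fintype V]

/-- Feasibility for the partition LP (P) of the 2NC-TAP instance `(G, T, cost)`. -/
def FeasibleP (G T : SimpleGraph V) (x : Sym2 V → ℝ) : Prop :=
  (∀ ℓ ∈ links G T, 0 ≤ x ℓ) ∧
  ∀ u : V, NonLeaf T u → ∀ P : Set (Set V), PtnSup T u P →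
    (P.ncard : ℝ) - 1 ≤
      ∑ ℓ ∈ Finset.univ.filter (fun ℓ : Sym2 V => ℓ ∈ links G T ∧ Crosses P ℓ), x ℓ


/-- The edge `e` lies in the cut `δ(S)`: it has exactly one endpoint in `S`. -/
def inCut (S : Set V) (e : Sym2 V) : Prop :=
  ∃ a b, e = s(a, b) ∧ a ∈ S ∧ b ∉ S


end TwoNCTAP

namespace SimpleGraph

variable {V : Type*} {G : SimpleGraph V} {S : Set V} {a b : V}

theorem Reachable.exists_adj_mem_notMem (h : G.Reachable a b) (ha : a ∈ S) (hb : b ∉ S) :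
    ∃ u v, G.Adj u v ∧ u ∈ S ∧ v ∉ S := by
  obtain ⟨p⟩ := h
  obtain ⟨d, -, hd, hd'⟩ := p.exists_boundary_dart S ha hb
  exact ⟨d.fst, d.snd, d.adj, hd, hd'⟩

theorem Reachable.mem_of_adj_closed (h : G.Reachable a b)
    (hS : ∀ u v, G.Adj u v → u ∈ S → v ∈ S) (ha : a ∈ S) : b ∈ S := by
  by_contra hb
  obtain ⟨u, v, huv, hu, hv⟩ := h.exists_adj_mem_notMem ha hb
  exact hv (hS u v huv hu)

end SimpleGraph

namespace TwoNCTAP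

variable {V : Type*}

section Leaves

variable {T : SimpleGraph V} {u v w : V}

theorem eq_of_adj_of_not_nonLeaf [Finite V] (hu : ¬NonLeaf T u) (hv : T.Adj u v)
    (hw : T.Adj u w) : w = v :=
  (Set.ncard_le_one (Set.toFinite _)).mp (not_lt.mp hu) w hw v hv

theorem nonLeaf_or_nonLeaf_of_adj [Fintype V] (hT : T.Preconnected)
    (hV : 3 ≤ Fintype.card V) (huv : T.Adj u v) : NonLeaf T u ∨ NonLeaf T v := by
  by_contra! h
  have hclosed : ∀ a b, T.Adj a b → a ∈ ({u, v} : Set V) → b ∈ ({u, v} : Set V) := by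
    rintro a b hab (rfl | rfl)
    · exact Or.inr (eq_of_adj_of_not_nonLeaf h.1 huv hab)
    · exact Or.inl (eq_of_adj_of_not_nonLeaf h.2 huv.symm hab)
  have hsub : (Finset.univ : Finset V) ⊆ {u, v} := fun b _ => by
    simpa using (hT u b).mem_of_adj_closed hclosed (Or.inl rfl)
  have := (Finset.card_le_card hsub).trans (Finset.card_le_two (a := u) (b := v))
  rw [Finset.card_univ] at this
  omega

end Leaves

section Partitions

variable {A B : Set V}

theorem isPartitionOf_pair (hA : A.Nonempty) (hB : B.Nonempty) (hAB : Disjoint A B) :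
    IsPartitionOf {A, B} (A ∪ B) := by
  refine ⟨by rintro C (rfl | rfl) <;> assumption,
    by rintro C (rfl | rfl) <;> simp, ?_⟩
  rintro z (hz | hz)
  · refine ⟨A, ⟨Or.inl rfl, hz⟩, ?_⟩
    rintro C ⟨rfl | rfl, hzC⟩
    · rfl
    · exact absurd hzC (hAB.notMem_of_mem_left hz)
  · refine ⟨B, ⟨Or.inr rfl, hz⟩, ?_⟩
    rintro C ⟨rfl | rfl, hzC⟩
    · exact absurd hz (hAB.notMem_of_mem_left hzC)
    · rfl

theorem ptnSup_pair {T : SimpleGraph V} {u : V} (hA : A.Nonempty) (hB : B.Nonempty)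
    (hAB : Disjoint A B) (hcover : A ∪ B = {v | v ≠ u})
    (hsep : ∀ a b, (delVert T u).Adj a b → a ∈ A → b ∉ B) : PtnSup T u {A, B} := by
  have hmem : ∀ {b}, b ≠ u → b ∈ A ∨ b ∈ B := fun hb => by
    rw [← Set.mem_union, hcover]; exact hb
  have hAclosed : ∀ a b, (delVert T u).Adj a b → a ∈ A → b ∈ A := fun a b hab ha =>
    (hmem hab.2.2).resolve_right (hsep a b hab ha)
  have hBclosed : ∀ a b, (delVert T u).Adj a b → a ∈ B → b ∈ B := fun a b hab ha =>
    (hmem hab.2.2).resolve_left fun hb => hsep b a hab.symm hb ha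
  refine ⟨hcover ▸ isPartitionOf_pair hA hB hAB, ?_⟩
  rintro C ⟨z, hz, rfl⟩
  rcases hmem hz with hzA | hzB
  · exact ⟨A, Or.inl rfl, fun w hw => hw.mem_of_adj_closed hAclosed hzA⟩
  · exact ⟨B, Or.inr rfl, fun w hw => hw.mem_of_adj_closed hBclosed hzB⟩

theorem inCut_of_crosses_pair {S : Set V} {e : Sym2 V} (hAS : A ⊆ S) (hBS : B ⊆ Sᶜ)
    (he : Crosses {A, B} e) : inCut S e := by
  obtain ⟨a, b, rfl, C, hC, D, hD, hCD, ha, hb⟩ := he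
  rcases hC with rfl | rfl <;> rcases hD with rfl | rfl
  · exact absurd rfl hCD
  · exact ⟨a, b, rfl, hAS ha, hBS hb⟩
  · exact ⟨b, a, Sym2.eq_swap, hAS hb, hBS ha⟩
  · exact absurd rfl hCD

end Partitions

theorem inCut_compl (S : Set V) (e : Sym2 V) : inCut Sᶜ e ↔ inCut S e := by
  constructor <;> rintro ⟨a, b, rfl, ha, hb⟩
  · exact ⟨b, a, Sym2.eq_swap, not_not.mp hb, ha⟩
  · exact ⟨b, a, Sym2.eq_swap, hb, not_not.mpr ha⟩

noncomputable def tildeX (T : SimpleGraph V) (x : Sym2 V → ℝ) (e : Sym2 V) : ℝ :=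
  if e ∈ T.edgeSet then 1 else x e

theorem tildeX_of_mem_edgeSet {T : SimpleGraph V} {x : Sym2 V → ℝ} {e : Sym2 V}
    (he : e ∈ T.edgeSet) : tildeX T x e = 1 :=
  if_pos he

variable [Fintype V]

section CutSums

variable {G T : SimpleGraph V} {x : Sym2 V → ℝ} {S : Set V}

noncomputable def cutEdges (G : SimpleGraph V) (S : Set V) : Finset (Sym2 V) :=
  Finset.univ.filter fun e => e ∈ G.edgeSet ∧ inCut S e

noncomputable def crossingLinks (G T : SimpleGraph V) (P : Set (Set V)) : Finset (Sym2 V) :=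
  Finset.univ.filter fun ℓ => ℓ ∈ links G T ∧ Crosses P ℓ

theorem cutEdges_compl (G : SimpleGraph V) (S : Set V) : cutEdges G Sᶜ = cutEdges G S :=
  Finset.filter_congr fun e _ => and_congr_right fun _ => inCut_compl S e

theorem sum_le_sum_cutEdges (hx : ∀ ℓ ∈ links G T, 0 ≤ x ℓ) {s : Finset (Sym2 V)}
    (hs : s ⊆ cutEdges G S) : ∑ e ∈ s, tildeX T x e ≤ ∑ e ∈ cutEdges G S, tildeX T x e := by
  refine Finset.sum_le_sum_of_subset_of_nonneg hs fun e he _ => ?_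
  have heG : e ∈ G.edgeSet := (Finset.mem_filter.mp he).2.1
  unfold tildeX
  split_ifs with heT
  · exact zero_le_one
  · exact hx e ⟨heG, heT⟩

theorem mem_cutEdges_of_tree (hTG : T ≤ G) {e : Sym2 V} (he : e ∈ T.edgeSet)
    (heS : inCut S e) : e ∈ cutEdges G S :=
  Finset.mem_filter.mpr ⟨Finset.mem_univ e, SimpleGraph.edgeSet_mono hTG he, heS⟩

theorem two_le_sum_cutEdges_of_two_tree_edges (hTG : T ≤ G)
    (hx : ∀ ℓ ∈ links G T, 0 ≤ x ℓ) {e₁ e₂ : Sym2 V} (he₁ : e₁ ∈ T.edgeSet)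
    (he₂ : e₂ ∈ T.edgeSet) (he₁S : inCut S e₁) (he₂S : inCut S e₂) (hne : e₁ ≠ e₂) :
    2 ≤ ∑ e ∈ cutEdges G S, tildeX T x e := by
  have hpair : ({e₁, e₂} : Finset (Sym2 V)) ⊆ cutEdges G S := by
    rintro e he
    rcases Finset.mem_insert.mp he with rfl | he
    · exact mem_cutEdges_of_tree hTG he₁ he₁S
    · exact Finset.mem_singleton.mp he ▸ mem_cutEdges_of_tree hTG he₂ he₂S
  calc (2 : ℝ) = ∑ e ∈ {e₁, e₂}, tildeX T x e := by
        rw [Finset.sum_pair hne, tildeX_of_mem_edgeSet he₁, tildeX_of_mem_edgeSet he₂]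
        norm_num
    _ ≤ _ := sum_le_sum_cutEdges hx hpair

theorem tree_edge_add_sum_crossingLinks_le (hTG : T ≤ G) (hx : ∀ ℓ ∈ links G T, 0 ≤ x ℓ)
    {P : Set (Set V)} (hP : ∀ ℓ, Crosses P ℓ → inCut S ℓ) {e₀ : Sym2 V}
    (he₀ : e₀ ∈ T.edgeSet) (he₀S : inCut S e₀) :
    1 + ∑ ℓ ∈ crossingLinks G T P, x ℓ ≤ ∑ e ∈ cutEdges G S, tildeX T x e := by
  have hlinks : ∀ ℓ ∈ crossingLinks G T P, ℓ ∈ links G T ∧ Crosses P ℓ := fun ℓ hℓ =>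
    (Finset.mem_filter.mp hℓ).2
  have he₀C : e₀ ∉ crossingLinks G T P := fun h => (hlinks e₀ h).1.2 he₀
  have hsub : insert e₀ (crossingLinks G T P) ⊆ cutEdges G S := by
    refine Finset.insert_subset (mem_cutEdges_of_tree hTG he₀ he₀S) fun ℓ hℓ => ?_
    exact Finset.mem_filter.mpr ⟨Finset.mem_univ ℓ, (hlinks ℓ hℓ).1.1, hP ℓ (hlinks ℓ hℓ).2⟩
  calc 1 + ∑ ℓ ∈ crossingLinks G T P, x ℓ
      = ∑ e ∈ insert e₀ (crossingLinks G T P), tildeX T x e := by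
        rw [Finset.sum_insert he₀C, tildeX_of_mem_edgeSet he₀]
        congr 1
        exact Finset.sum_congr rfl fun ℓ hℓ => (if_neg (hlinks ℓ hℓ).1.2).symm
    _ ≤ _ := sum_le_sum_cutEdges hx hsub

/-- The LP constraint of the partition `{S ∖ {u}, V ∖ S}` of `V ∖ {u}` supplies the second
unit. -/
theorem two_le_sum_cutEdges_of_unique_tree_edge (hTG : T ≤ G) (hx : FeasibleP G T x)
    {u v : V} (huv : T.Adj u v) (huS : u ∈ S) (hvS : v ∉ S) (hu : NonLeaf T u)
    (huniq : ∀ a b, T.Adj a b → a ∈ S → b ∉ S → a = u ∧ b = v) :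
    2 ≤ ∑ e ∈ cutEdges G S, tildeX T x e := by
  obtain ⟨w, huw, hwv⟩ := Set.exists_ne_of_one_lt_ncard hu v
  have hwS : w ∈ S := by
    by_contra hwS
    exact hwv (huniq u w huw huS hwS).2
  have hdisj : Disjoint (S \ {u}) Sᶜ := disjoint_compl_right.mono_left Set.sdiff_subset
  have hcover : S \ {u} ∪ Sᶜ = {z | z ≠ u} := by
    ext z
    by_cases hz : z = u <;> simp [hz, huS, em]
  have hsep : ∀ a b, (delVert T u).Adj a b → a ∈ S \ {u} → b ∉ Sᶜ :=
    fun a b hab ha hb => hab.2.1 (huniq a b hab.1 ha.1 hb).1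
  have hA : (S \ {u}).Nonempty := ⟨w, hwS, huw.ne'⟩
  have hP := ptnSup_pair hA ⟨v, hvS⟩ hdisj hcover hsep
  have hLP : 1 ≤ ∑ ℓ ∈ crossingLinks G T {S \ {u}, Sᶜ}, x ℓ := by
    have h := hx.2 u hu _ hP
    rw [Set.ncard_pair (hdisj.ne hA.ne_empty)] at h
    norm_num at h
    exact h
  have hcross := tree_edge_add_sum_crossingLinks_le (P := {S \ {u}, Sᶜ}) hTG hx.1
    (fun ℓ => inCut_of_crosses_pair Set.sdiff_subset subset_rfl) (T.mem_edgeSet.mpr huv)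
    ⟨u, v, rfl, huS, hvS⟩
  linarith

end CutSums

theorem tilde_x_satisfies_cut_constraints_general
    (G T : SimpleGraph V) (hV : 3 ≤ Fintype.card V)
    (hTG : T ≤ G) (hT : T.IsTree)
    (x : Sym2 V → ℝ) (hx : FeasibleP G T x) :
    ∀ S : Set V, S.Nonempty → S ≠ Set.univ →
      (2 : ℝ) ≤ ∑ e ∈ Finset.univ.filter (fun e : Sym2 V => e ∈ G.edgeSet ∧ inCut S e),
        (if e ∈ T.edgeSet then 1 else x e) := by
  rintro S ⟨a, ha⟩ hS
  obtain ⟨b, hb⟩ := (Set.ne_univ_iff_exists_notMem S).mp hS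
  have hconn := hT.connected.preconnected
  obtain ⟨u, v, huv, hu, hv⟩ := (hconn a b : T.Reachable a b).exists_adj_mem_notMem ha hb
  change 2 ≤ ∑ e ∈ cutEdges G S, tildeX T x e
  by_cases huniq : ∀ a b, T.Adj a b → a ∈ S → b ∉ S → a = u ∧ b = v
  · rcases nonLeaf_or_nonLeaf_of_adj hconn hV huv with hu' | hv'
    · exact two_le_sum_cutEdges_of_unique_tree_edge hTG hx huv hu hv hu' huniq
    · rw [← cutEdges_compl]
      exact two_le_sum_cutEdges_of_unique_tree_edge hTG hx huv.symm hv (not_not.mpr hu) hv'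
        fun a b hab ha hb => (huniq b a hab.symm (not_not.mp hb) ha).symm
  · push Not at huniq
    obtain ⟨a, b, hab, ha, hb, hne⟩ := huniq
    refine two_le_sum_cutEdges_of_two_tree_edges hTG hx.1 hab huv ⟨a, b, rfl, ha, hb⟩
      ⟨u, v, rfl, hu, hv⟩ fun h => ?_
    rcases Sym2.eq_iff.mp h with ⟨rfl, rfl⟩ | ⟨rfl, -⟩
    · exact hne rfl rfl
    · exact hv ha

/-- If `x` is a feasible solution of the partition LP (P) of a 2NC-TAP
instance, then the vector `x̃` (equal to `x` on links and to `1` on tree edges)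
satisfies all cut constraints for 2-edge connectivity. -/
theorem tilde_x_satisfies_cut_constraints
    (G T : SimpleGraph V) (hV : 3 ≤ Fintype.card V)
    (hTG : T ≤ G) (hT : T.IsTree)
    (cost : Sym2 V → ℝ) (hcost : ∀ ℓ ∈ links G T, 0 ≤ cost ℓ)
    (x : Sym2 V → ℝ) (hx : FeasibleP G T x) :
    ∀ S : Set V, S.Nonempty → S ≠ Set.univ →
      (2 : ℝ) ≤ ∑ e ∈ Finset.univ.filter (fun e : Sym2 V => e ∈ G.edgeSet ∧ inCut S e),
        (if e ∈ T.edgeSet then 1 else x e) :=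
  tilde_x_satisfies_cut_constraints_general G T hV hTG hT x hx

end TwoNCTAP
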